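/- For g ≠ 0 and h ≥ 0, the Tukey g–h transform T_{g,h}(x) = ((exp(g·x) − 1)/g)·exp(h·x²/2) is strictly increasing on ℝ. -/

import Mathlib

open Set Real

/-!
Differentiate: `T'(x) = exp(hx²/2) · (exp(gx) + h · x (exp(gx) − 1)/g)`. The first summand is
positive, and `x (exp(gx) − 1)/g = (gx)(exp(gx) − 1)/g² ≥ 0` since `exp t − 1` has the sign of `t`.
-/

noncomputable def tukeyGH (g h x : ℝ) : ℝ :=
  (exp (g * x) - 1) / g * exp (h * x ^ 2 / 2)

lemma exp_sub_one_mul_self_nonneg (t : ℝ) : 0 ≤ (exp t - 1) * t := by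
  rcases le_or_gt 0 t with ht | ht
  · exact mul_nonneg (sub_nonneg.2 (one_le_exp ht)) ht
  · exact mul_nonneg_of_nonpos_of_nonpos (sub_nonpos.2 (exp_lt_one_iff.2 ht).le) ht.le

lemma exp_mul_sub_one_div_mul_self_nonneg (g x : ℝ) : 0 ≤ (exp (g * x) - 1) / g * x := by
  rcases eq_or_ne g 0 with rfl | hg
  · simp
  · have hrw : (exp (g * x) - 1) / g * x = (exp (g * x) - 1) * (g * x) / g ^ 2 := by
      field_simp
    rw [hrw]
    exact div_nonneg (exp_sub_one_mul_self_nonneg _) (sq_nonneg g)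

lemma hasDerivAt_exp_mul_sub_one_div {g : ℝ} (hg : g ≠ 0) (x : ℝ) :
    HasDerivAt (fun x ↦ (exp (g * x) - 1) / g) (exp (g * x)) x := by
  have h := (((hasDerivAt_id x).const_mul g).exp.sub_const 1).div_const g
  simpa [mul_div_cancel_right₀ _ hg] using h

lemma hasDerivAt_exp_mul_sq_div_two (h x : ℝ) :
    HasDerivAt (fun x ↦ exp (h * x ^ 2 / 2)) (exp (h * x ^ 2 / 2) * (h * x)) x := by
  have hquad : HasDerivAt (fun x ↦ h * x ^ 2 / 2) (h * x) x :=
    (((hasDerivAt_pow 2 x).const_mul h).div_const 2).congr_deriv (by ring)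
  exact hquad.exp

lemma hasDerivAt_tukeyGH {g : ℝ} (hg : g ≠ 0) (h x : ℝ) :
    HasDerivAt (tukeyGH g h)
      (exp (h * x ^ 2 / 2) * (exp (g * x) + h * ((exp (g * x) - 1) / g * x))) x :=
  ((hasDerivAt_exp_mul_sub_one_div hg x).mul (hasDerivAt_exp_mul_sq_div_two h x)).congr_deriv
    (by ring)

lemma tukeyGH_strictMono {g h : ℝ} (hg : g ≠ 0) (hh : 0 ≤ h) : StrictMono (tukeyGH g h) :=
  strictMono_of_hasDerivAt_pos (hasDerivAt_tukeyGH hg h) fun x ↦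
    mul_pos (exp_pos _) (add_pos_of_pos_of_nonneg (exp_pos _)
      (mul_nonneg hh (exp_mul_sub_one_div_mul_self_nonneg g x)))

/-- For `g ≠ 0` and `h ≥ 0`, the Tukey `g–h` transform
`T_{g,h}(x) = ((exp(gx) − 1)/g)·exp(hx²/2)` is strictly increasing on `ℝ`. -/
theorem tukey_gh_transform_strictMono
    (g h : ℝ) (hg : g ≠ 0) (hh : 0 ≤ h) :
    StrictMono (fun x : ℝ => (Real.exp (g * x) - 1) / g * Real.exp (h * x ^ 2 / 2)) :=
  tukeyGH_strictMono hg hh
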